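/- Let Ω ⊆ ℝⁿ be an open set such that: ∂Ω is lower Ahlfors regular (there is c > 0 with ℋ^{n−1}(∂Ω ∩ B(x,r)) ≥ c·r^{n−1} for all x ∈ ∂Ω and r ∈ (0, 2·diam ∂Ω)); ℋ^{n−1}(∂Ω ∖ ∂*Ω) = 0; and σ := ℋ^{n−1} restricted to ∂Ω is a doubling measure on ∂Ω. Fix κ > 0 and let u : Ω → ℝ be Lebesgue measurable, and let f : ∂Ω → ℝ be a function such that for σ-a.e. x ∈ ∂Ω the κ-nontangential trace of u at x exists and equals f(x). Then: (i) f is σ-measurable on ∂Ω; (ii) N^ε_κ u(x) → |f(x)| as ε → 0⁺ for σ-a.e. x ∈ ∂Ω; and (iii) if in addition N^δ_κ u ∈ L^p(∂Ω,σ) for some p ∈ (0,∞) and some δ > 0, then f ∈ L^p(∂Ω,σ) and N^ε_κ u → |f| in L^p(∂Ω,σ) as ε → 0⁺. -/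

import Mathlib

open MeasureTheory Metric Set Filter
open scoped ENNReal NNReal Topology

noncomputable section

abbrev Euc (n : ℕ) : Type := EuclideanSpace ℝ (Fin n)

variable {n : ℕ}

/-- The nontangential approach region `Γ_κ(x)` to `∂Ω` from within `Ω`. -/
def ntRegion (Ω : Set (Euc n)) (κ : ℝ) (x : Euc n) : Set (Euc n) :=
  {y | y ∈ Ω ∧ dist x y < (1 + κ) * infDist y (frontier Ω)}

/-- The one-sided collar neighborhood `O_ε` of `∂Ω`. -/
def collar (Ω : Set (Euc n)) (ε : ℝ) : Set (Euc n) :=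
  {y | y ∈ Ω ∧ infDist y (frontier Ω) < ε}

/-- Nontangential maximal function of `u` restricted to a set `S` (truncated version). -/
def ntMaxOn {E : Type*} [NormedAddCommGroup E] (Ω S : Set (Euc n)) (κ : ℝ)
    (u : Euc n → E) (x : Euc n) : ℝ≥0∞ :=
  essSup (fun y => (‖u y‖₊ : ℝ≥0∞)) (volume.restrict (ntRegion Ω κ x ∩ S))

/-- Nontangential maximal function `N_κ u`. -/
def ntMax {E : Type*} [NormedAddCommGroup E] (Ω : Set (Euc n)) (κ : ℝ)
    (u : Euc n → E) (x : Euc n) : ℝ≥0∞ :=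
  essSup (fun y => (‖u y‖₊ : ℝ≥0∞)) (volume.restrict (ntRegion Ω κ x))

/-- `u` has κ-nontangential trace `v` at the boundary point `x`. -/
def HasNTTrace {E : Type*} [NormedAddCommGroup E] (Ω : Set (Euc n)) (κ : ℝ)
    (u : Euc n → E) (x : Euc n) (v : E) : Prop :=
  x ∈ closure (ntRegion Ω κ x) ∧
  ∃ N : Set (Euc n), N ⊆ ntRegion Ω κ x ∧ volume N = 0 ∧
    Tendsto u (nhdsWithin x (ntRegion Ω κ x \ N)) (nhds v)

/-- `Sig` is an Ahlfors regular set (of dimension `n-1`) with constant `C`. -/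
def AhlforsRegularWith (n : ℕ) (Sig : Set (Euc n)) (C : ℝ) : Prop :=
  1 < C ∧ IsClosed Sig ∧ ∀ x ∈ Sig, ∀ r : ℝ, 0 < r →
    ENNReal.ofReal r < 2 * EMetric.diam Sig →
    ENNReal.ofReal (C⁻¹ * r ^ (n - 1)) ≤ μH[(n : ℝ) - 1] (Sig ∩ ball x r) ∧
      μH[(n : ℝ) - 1] (Sig ∩ ball x r) ≤ ENNReal.ofReal (C * r ^ (n - 1))

/-- The measure-theoretic (geometric measure theoretic) boundary `∂*Ω`. -/
def mtBoundary (n : ℕ) (Ω : Set (Euc n)) : Set (Euc n) :=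
  {x | 0 < limsup (fun r : ℝ => volume (Ω ∩ ball x r) / ENNReal.ofReal (r ^ n)) (𝓝[>] 0) ∧
       0 < limsup (fun r : ℝ => volume (Ωᶜ ∩ ball x r) / ENNReal.ofReal (r ^ n)) (𝓝[>] 0)}

/-- The nontangentially accessible boundary `∂_nta Ω`. -/
def ntaBoundary (n : ℕ) (Ω : Set (Euc n)) : Set (Euc n) :=
  {x | x ∈ frontier Ω ∧ ∀ κ : ℝ, 0 < κ → x ∈ closure (ntRegion Ω κ x)}

/-- The Laplacian `Δu = ∑ ∂²u/∂x_j²`, via iterated Fréchet derivatives. -/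
def laplacian (u : Euc n → ℝ) (x : Euc n) : ℝ :=
  ∑ i : Fin n, fderiv ℝ (fun z => fderiv ℝ u z (EuclideanSpace.single i 1)) x
    (EuclideanSpace.single i 1)

/-- `u` is harmonic on the open set `Ω`. -/
def HarmonicOn' (u : Euc n → ℝ) (Ω : Set (Euc n)) : Prop :=
  ContDiffOn ℝ 2 u Ω ∧ ∀ x ∈ Ω, laplacian u x = 0

/-- `w` is (continuous and) subharmonic on the open set `Ω`, via the sub-mean value property. -/
def SubharmonicOn (w : Euc n → ℝ) (Ω : Set (Euc n)) : Prop :=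
  ContinuousOn w Ω ∧ ∀ x ∈ Ω, ∀ r : ℝ, 0 < r → closedBall x r ⊆ Ω →
    w x ≤ ⨍ y in ball x r, w y

/-- `Sig` is a uniformly rectifiable (UR) set: closed, Ahlfors regular, with
Big Pieces of Lipschitz Images. -/
def IsURSet (n : ℕ) (Sig : Set (Euc n)) : Prop :=
  IsClosed Sig ∧ (∃ C : ℝ, AhlforsRegularWith n Sig C) ∧
  ∃ ε : ℝ, 0 < ε ∧ ∃ M₀ : ℝ≥0, ∀ x ∈ Sig, ∀ r : ℝ, 0 < r →
    ENNReal.ofReal r < EMetric.diam Sig →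
    ∃ Φ : EuclideanSpace ℝ (Fin (n - 1)) → Euc n, LipschitzWith M₀ Φ ∧
      ENNReal.ofReal (ε * r ^ (n - 1)) ≤
        μH[(n : ℝ) - 1] (Sig ∩ ball x r ∩ Φ '' ball (0 : EuclideanSpace ℝ (Fin (n - 1))) r)

end

/-!
`N^ε_κ u(x)` is an essential supremum over the sections `Γ_κ(x) ∩ O_ε` of one measurable subset
of `ℝⁿ × ℝⁿ`, hence Borel in `x`. At a point `x ∈ ∂Ω` where the trace exists, `Γ_κ(x) ∩ O_ε` lies
between `Γ_κ(x) ∩ B(x, ε)` and `Γ_κ(x) ∩ B(x, (1 + κ) ε)`, and the essential suprema over the latter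
two sets tend to `|f(x)|`. So `|f|`, and likewise `max(±f, 0)` (the traces of `max(±u, 0)`), are
a.e. limits of Borel functions. For the `Lᵖ` statement, `N^δ_κ u` dominates both `N^ε_κ u` for
`ε ≤ δ` and `|f|`, so dominated convergence applies.
-/

section EssSup

variable {α β : Type*} [MeasurableSpace α] [MeasurableSpace β]

theorem ENNReal.essSup_le_iff_measure_lt_eq_zero {μ : Measure α} {f : α → ℝ≥0∞} {c : ℝ≥0∞} :
    essSup f μ ≤ c ↔ μ {x | c < f x} = 0 := by
  refine ⟨fun h => measure_mono_null (fun x hx => ?_) (ae_iff.1 (ae_le_essSup f)),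
    fun h => essSup_le_of_ae_le c (ae_iff.2 (by simpa only [not_le] using h))⟩
  exact not_le.2 (h.trans_lt hx)

theorem measurable_essSup_restrict_prodMk_preimage {ν : Measure β} [SFinite ν]
    {T : Set (α × β)} (hT : MeasurableSet T) {g : β → ℝ≥0∞} (hg : Measurable g) :
    Measurable fun x => essSup g (ν.restrict (Prod.mk x ⁻¹' T)) := by
  refine measurable_of_Iic fun c => ?_
  convert measurable_measure_prodMk_left (ν := ν)
    (hT.inter (measurableSet_lt measurable_const (hg.comp measurable_snd)))
    (measurableSet_singleton 0) using 1
  ext x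
  rw [mem_preimage, mem_Iic, ENNReal.essSup_le_iff_measure_lt_eq_zero,
    Measure.restrict_apply (measurableSet_lt measurable_const hg), mem_preimage,
    mem_singleton_iff, preimage_inter, inter_comm]
  rfl

theorem tendsto_essSup_restrict_inter_ball {X : Type*} [PseudoMetricSpace X] [MeasurableSpace X]
    [OpensMeasurableSpace X] {μ : Measure X} [μ.IsOpenPosMeasure] {A N : Set X} {x : X}
    {g : X → ℝ≥0∞} {a : ℝ≥0∞} (hA : IsOpen A) (hx : x ∈ closure A) (hN : μ N = 0)
    (hg : Tendsto g (𝓝[A \ N] x) (𝓝 a)) :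
    Tendsto (fun r => essSup g (μ.restrict (A ∩ ball x r))) (𝓝[>] 0) (𝓝 a) := by
  have hnear : ∀ {P : ℝ≥0∞ → Prop}, (∀ᶠ b in 𝓝 a, P b) →
      ∃ δ > 0, ∀ y ∈ A \ N, dist y x < δ → P (g y) := fun hP =>
    Metric.eventually_nhds_iff.1 (eventually_nhdsWithin_iff.1 (hg.eventually hP)) |>.imp
      fun _ ⟨hδ, h⟩ => ⟨hδ, fun y hy hyx => h hyx hy⟩
  have hrestrict : ∀ r s, μ.restrict (A ∩ ball x r) s = μ (s ∩ (A ∩ ball x r)) := fun r s =>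
    Measure.restrict_apply' (hA.inter isOpen_ball).measurableSet
  refine tendsto_order.2 ⟨fun b hb => ?_, fun b hb => ?_⟩
  · obtain ⟨δ, hδ, hgδ⟩ := hnear (eventually_gt_nhds hb)
    filter_upwards [Ioo_mem_nhdsGT hδ] with r hr
    rw [← not_le, ENNReal.essSup_le_iff_measure_lt_eq_zero, hrestrict]
    have hpos : 0 < μ ((A ∩ ball x r) \ N) := by
      rw [measure_sdiff_null hN]
      refine (hA.inter isOpen_ball).measure_pos μ ?_
      rw [inter_comm]
      exact mem_closure_iff.1 hx _ isOpen_ball (mem_ball_self hr.1)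
    have hsub : (A ∩ ball x r) \ N ⊆ {y | b < g y} ∩ (A ∩ ball x r) := fun y hy =>
      ⟨hgδ y ⟨hy.1.1, hy.2⟩ ((mem_ball.1 hy.1.2).trans hr.2), hy.1⟩
    exact (hpos.trans_le (measure_mono hsub)).ne'
  · obtain ⟨b', hab', hb'b⟩ := exists_between hb
    obtain ⟨δ, hδ, hgδ⟩ := hnear (eventually_lt_nhds hab')
    filter_upwards [Ioo_mem_nhdsGT hδ] with r hr
    refine lt_of_le_of_lt ?_ hb'b
    rw [ENNReal.essSup_le_iff_measure_lt_eq_zero, hrestrict]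
    refine measure_mono_null (fun y ⟨hlt, hyA, hyr⟩ => ?_) hN
    by_contra hyN
    exact (hgδ y ⟨hyA, hyN⟩ ((mem_ball.1 hyr).trans hr.2)).not_gt hlt

end EssSup

section NontangentialMaximalFunction

variable {n : ℕ} {E : Type*} [NormedAddCommGroup E] {Ω S T : Set (Euc n)} {κ : ℝ}
  {u : Euc n → E} {x : Euc n} {v : E}

theorem isOpen_ntRegion (hΩ : IsOpen Ω) (κ : ℝ) (x : Euc n) : IsOpen (ntRegion Ω κ x) :=
  hΩ.inter (isOpen_lt (continuous_const.dist continuous_id)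
    (continuous_const.mul (continuous_infDist_pt _)))

theorem measurableSet_collar (hΩ : MeasurableSet Ω) (ε : ℝ) : MeasurableSet (collar Ω ε) :=
  hΩ.inter (measurableSet_lt (continuous_infDist_pt _).measurable measurable_const)

theorem measurableSet_setOf_mem_ntRegion (hΩ : MeasurableSet Ω) (κ : ℝ) :
    MeasurableSet {p : Euc n × Euc n | p.2 ∈ ntRegion Ω κ p.1} :=
  (measurable_snd hΩ).inter (measurableSet_lt (measurable_fst.dist measurable_snd)
    (measurable_const.mul ((continuous_infDist_pt _).measurable.comp measurable_snd)))

theorem measurable_ntMaxOn [MeasurableSpace E] [OpensMeasurableSpace E] (hΩ : MeasurableSet Ω)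
    (hS : MeasurableSet S) (κ : ℝ) (hu : Measurable u) : Measurable (ntMaxOn Ω S κ u) :=
  measurable_essSup_restrict_prodMk_preimage
    ((measurableSet_setOf_mem_ntRegion hΩ κ).inter (measurable_snd hS))
    hu.nnnorm.coe_nnreal_ennreal

theorem ntMaxOn_mono (h : ntRegion Ω κ x ∩ S ⊆ T) : ntMaxOn Ω S κ u x ≤ ntMaxOn Ω T κ u x :=
  essSup_mono_measure' (Measure.restrict_mono (subset_inter inter_subset_left h) le_rfl)

theorem monotone_ntMaxOn_collar (Ω : Set (Euc n)) (κ : ℝ) (u : Euc n → E) (x : Euc n) :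
    Monotone fun ε => ntMaxOn Ω (collar Ω ε) κ u x :=
  fun _ _ hεδ => ntMaxOn_mono fun _ hy => ⟨hy.2.1, hy.2.2.trans_le hεδ⟩

theorem HasNTTrace.comp {F : Type*} [NormedAddCommGroup F] {φ : E → F}
    (h : HasNTTrace Ω κ u x v) (hφ : ContinuousAt φ v) : HasNTTrace Ω κ (φ ∘ u) x (φ v) :=
  let ⟨hcl, N, hNsub, hN, hlim⟩ := h
  ⟨hcl, N, hNsub, hN, hφ.tendsto.comp hlim⟩

theorem HasNTTrace.tendsto_ntMaxOn_collar (h : HasNTTrace Ω κ u x v) (hΩ : IsOpen Ω)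
    (hκ : 0 < 1 + κ) (hx : x ∈ frontier Ω) :
    Tendsto (fun ε => ntMaxOn Ω (collar Ω ε) κ u x) (𝓝[>] 0) (𝓝 (‖v‖₊ : ℝ≥0∞)) := by
  obtain ⟨hcl, N, -, hN, hlim⟩ := h
  have hball : Tendsto (fun r => ntMaxOn Ω (ball x r) κ u x) (𝓝[>] 0) (𝓝 (‖v‖₊ : ℝ≥0∞)) :=
    tendsto_essSup_restrict_inter_ball (isOpen_ntRegion hΩ κ x) hcl hN
      (ENNReal.tendsto_coe.2 hlim.nnnorm)
  have hscale : Tendsto (fun ε : ℝ => (1 + κ) * ε) (𝓝[>] 0) (𝓝[>] 0) :=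
    tendsto_nhdsWithin_iff.2
      ⟨by simpa using ((continuous_const_mul (1 + κ)).tendsto 0).mono_left nhdsWithin_le_nhds,
        eventually_nhdsWithin_of_forall fun _ hε => mul_pos hκ hε⟩
  refine tendsto_of_tendsto_of_tendsto_of_le_of_le hball (hball.comp hscale)
    (fun ε => ntMaxOn_mono fun y hy => ⟨hy.1.1, ?_⟩) (fun ε => ntMaxOn_mono fun y hy => ?_)
  · exact (infDist_le_dist_of_mem hx).trans_lt hy.2
  · rw [mem_ball, dist_comm]
    exact hy.1.2.trans (mul_lt_mul_of_pos_left hy.2.2 hκ)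

theorem aemeasurable_nnnorm_of_ae_hasNTTrace [MeasurableSpace E] [OpensMeasurableSpace E]
    {σ : Measure (Euc n)} {f : Euc n → E} (hΩ : IsOpen Ω) (hκ : 0 < 1 + κ) (hu : Measurable u)
    (hσ : ∀ᵐ x ∂σ, x ∈ frontier Ω) (htr : ∀ᵐ x ∂σ, HasNTTrace Ω κ u x (f x)) :
    AEMeasurable (fun x => (‖f x‖₊ : ℝ≥0∞)) σ :=
  aemeasurable_of_tendsto_metrizable_ae (𝓝[>] 0)
    (fun ε => (measurable_ntMaxOn hΩ.measurableSet
      (measurableSet_collar hΩ.measurableSet ε) κ hu).aemeasurable)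
    (by filter_upwards [htr, hσ] with x hx hxΩ using hx.tendsto_ntMaxOn_collar hΩ hκ hxΩ)

theorem aemeasurable_of_ae_hasNTTrace {σ : Measure (Euc n)} {u f : Euc n → ℝ} (hΩ : IsOpen Ω)
    (hκ : 0 < 1 + κ) (hu : Measurable u) (hσ : ∀ᵐ x ∂σ, x ∈ frontier Ω)
    (htr : ∀ᵐ x ∂σ, HasNTTrace Ω κ u x (f x)) : AEMeasurable f σ := by
  have hpart : ∀ φ : ℝ → ℝ, Continuous φ → (∀ t, 0 ≤ φ t) →
      AEMeasurable (fun x => φ (f x)) σ := fun φ hφ hφ0 => by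
    simpa [abs_of_nonneg (hφ0 _)] using (aemeasurable_nnnorm_of_ae_hasNTTrace hΩ hκ
      (hφ.measurable.comp hu) hσ (htr.mono fun x hx => hx.comp hφ.continuousAt)).ennreal_toReal
  have hparts := (hpart (fun t => max t 0) (by fun_prop) fun _ => le_max_right _ _).sub
    (hpart (fun t => max (-t) 0) (by fun_prop) fun _ => le_max_right _ _)
  rwa [show ((fun x => max (f x) 0) - fun x => max (-f x) 0) = f from
    funext fun x => max_zero_sub_max_neg_zero_eq_self (f x)] at hparts

end NontangentialMaximalFunction

section DominatedConvergence

theorem ENNReal.ofReal_abs_toReal_sub_le {a c : ℝ≥0∞} {b : ℝ} (hb : 0 ≤ b) (hac : a ≤ c)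
    (hbc : ENNReal.ofReal b ≤ c) : ENNReal.ofReal |a.toReal - b| ≤ c :=
  calc ENNReal.ofReal |a.toReal - b| ≤ ENNReal.ofReal (max a.toReal b) :=
        ENNReal.ofReal_le_ofReal (abs_sub_le_iff.2 ⟨(sub_le_self _ hb).trans (le_max_left _ _),
          (sub_le_self _ ENNReal.toReal_nonneg).trans (le_max_right _ _)⟩)
    _ ≤ c := by
        rw [ENNReal.ofReal_max]
        exact max_le (ENNReal.ofReal_toReal_le.trans hac) hbc

theorem tendsto_lintegral_rpow_of_monotone {X : Type*} [MeasurableSpace X] {μ : Measure X}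
    {F : ℝ → X → ℝ≥0∞} {g : X → ℝ} {p δ : ℝ} (hF : ∀ ε, AEMeasurable (F ε) μ)
    (hmono : ∀ x, Monotone fun ε => F ε x) (hg : AEMeasurable g μ)
    (hlim : ∀ᵐ x ∂μ, Tendsto (fun ε => F ε x) (𝓝[>] 0) (𝓝 (‖g x‖₊ : ℝ≥0∞)))
    (hp : 0 < p) (hδ : 0 < δ) (hint : ∫⁻ x, F δ x ^ p ∂μ < ⊤) :
    ∫⁻ x, (‖g x‖₊ : ℝ≥0∞) ^ p ∂μ < ⊤ ∧
      Tendsto (fun ε => ∫⁻ x, ENNReal.ofReal (abs ((F ε x).toReal - abs (g x))) ^ p ∂μ)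
        (𝓝[>] 0) (𝓝 0) := by
  have hsmall : ∀ᶠ ε in 𝓝[>] (0 : ℝ), ε < δ := nhdsWithin_le_nhds (eventually_lt_nhds hδ)
  have hg_le : ∀ᵐ x ∂μ, (‖g x‖₊ : ℝ≥0∞) ≤ F δ x := by
    filter_upwards [hlim] with x hx
    exact le_of_tendsto hx (hsmall.mono fun ε hε => hmono x hε.le)
  refine ⟨(lintegral_mono_ae ?_).trans_lt hint, ?_⟩
  · filter_upwards [hg_le] with x hx using ENNReal.rpow_le_rpow hx hp.le
  have hmeas : ∀ ε,
      AEMeasurable (fun x => ENNReal.ofReal (abs ((F ε x).toReal - abs (g x))) ^ p) μ :=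
    fun ε => (((hF ε).ennreal_toReal.sub hg.abs).abs.ennreal_ofReal).pow_const p
  have hbound : ∀ᶠ ε in 𝓝[>] (0 : ℝ), ∀ᵐ x ∂μ,
      ENNReal.ofReal (abs ((F ε x).toReal - abs (g x))) ^ p ≤ F δ x ^ p := by
    filter_upwards [hsmall] with ε hε
    filter_upwards [hg_le] with x hx
    refine ENNReal.rpow_le_rpow (ENNReal.ofReal_abs_toReal_sub_le (abs_nonneg _)
      (hmono x hε.le) ?_) hp.le
    rwa [← Real.enorm_eq_ofReal_abs, enorm_eq_nnnorm]
  have hlim_zero : ∀ᵐ x ∂μ, Tendsto (fun ε => ENNReal.ofReal (abs ((F ε x).toReal - abs (g x))) ^ p)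
      (𝓝[>] 0) (𝓝 0) := by
    filter_upwards [hlim] with x hx
    have htoReal : Tendsto (fun ε => (F ε x).toReal) (𝓝[>] 0) (𝓝 |g x|) := by
      simpa [Function.comp_def] using (ENNReal.tendsto_toReal ENNReal.coe_ne_top).comp hx
    simpa [ENNReal.zero_rpow_of_pos hp] using
      (ENNReal.tendsto_ofReal (htoReal.sub_const |g x|).abs).ennrpow_const p
  simpa only [lintegral_zero] using tendsto_lintegral_filter_of_dominated_convergence' _
    (Eventually.of_forall hmeas) hbound hint.ne hlim_zero

end DominatedConvergence

theorem statement12_general (n : ℕ)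
    (Ω : Set (Euc n)) (hΩ : IsOpen Ω)
    (σ : Measure (Euc n)) (hσ : σ = (μH[(n : ℝ) - 1]).restrict (frontier Ω))
    (κ : ℝ) (hκ : 0 < κ)
    (u : Euc n → ℝ) (hu : Measurable u)
    (f : Euc n → ℝ)
    (htr : ∀ᵐ x ∂σ, HasNTTrace Ω κ u x (f x)) :
    -- (i) f is σ-measurable
    AEMeasurable f σ ∧
    -- (ii) N^ε_κ u (x) → |f(x)| as ε → 0⁺, for σ-a.e. x
    (∀ᵐ x ∂σ, Tendsto (fun ε : ℝ => ntMaxOn Ω (collar Ω ε) κ u x) (𝓝[>] 0)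
      (𝓝 (‖f x‖₊ : ℝ≥0∞))) ∧
    -- (iii) if N^δ_κ u ∈ L^p then f ∈ L^p and N^ε_κ u → |f| in L^p as ε → 0⁺
    (∀ p : ℝ, 0 < p → ∀ δ : ℝ, 0 < δ →
      ∫⁻ x, (ntMaxOn Ω (collar Ω δ) κ u x) ^ p ∂σ < ⊤ →
      (∫⁻ x, (‖f x‖₊ : ℝ≥0∞) ^ p ∂σ < ⊤ ∧
        Tendsto (fun ε : ℝ =>
            ∫⁻ x, (ENNReal.ofReal (abs ((ntMaxOn Ω (collar Ω ε) κ u x).toReal - abs (f x)))) ^ p ∂σ)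
          (𝓝[>] 0) (𝓝 0))) := by
  have hκ' : 0 < 1 + κ := by linarith
  have hfrontier : ∀ᵐ x ∂σ, x ∈ frontier Ω := hσ ▸ ae_restrict_mem isClosed_frontier.measurableSet
  have hlim : ∀ᵐ x ∂σ, Tendsto (fun ε : ℝ => ntMaxOn Ω (collar Ω ε) κ u x) (𝓝[>] 0)
      (𝓝 (‖f x‖₊ : ℝ≥0∞)) := by
    filter_upwards [htr, hfrontier] with x hx hxΩ using hx.tendsto_ntMaxOn_collar hΩ hκ' hxΩ
  have hf : AEMeasurable f σ := aemeasurable_of_ae_hasNTTrace hΩ hκ' hu hfrontier htr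
  exact ⟨hf, hlim, fun p hp δ hδ hint => tendsto_lintegral_rpow_of_monotone
    (fun ε => (measurable_ntMaxOn hΩ.measurableSet
      (measurableSet_collar hΩ.measurableSet ε) κ hu).aemeasurable)
    (monotone_ntMaxOn_collar Ω κ u) hf hlim hp hδ hint⟩

/-- measurability of nontangential traces, pointwise a.e. convergence of
the truncated nontangential maximal functions to `|f|`, and convergence in `L^p`. -/
theorem statement12 (n : ℕ) (hn : 2 ≤ n)
    (Ω : Set (Euc n)) (hΩ : IsOpen Ω)
    (c : ℝ) (hc : 0 < c)
    (hlAR : ∀ x ∈ frontier Ω, ∀ r : ℝ, 0 < r →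
      ENNReal.ofReal r < 2 * EMetric.diam (frontier Ω) →
      ENNReal.ofReal (c * r ^ (n - 1)) ≤ μH[(n : ℝ) - 1] (frontier Ω ∩ ball x r))
    (hmt : μH[(n : ℝ) - 1] (frontier Ω \ mtBoundary n Ω) = 0)
    (σ : Measure (Euc n)) (hσ : σ = (μH[(n : ℝ) - 1]).restrict (frontier Ω))
    (hdbl : ∃ Cd : ℝ≥0∞, Cd < ⊤ ∧ ∀ x ∈ frontier Ω, ∀ r : ℝ, 0 < r →
      σ (ball x (2 * r) ∩ frontier Ω) ≤ Cd * σ (ball x r ∩ frontier Ω))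
    (κ : ℝ) (hκ : 0 < κ)
    (u : Euc n → ℝ) (hu : Measurable u)
    (f : Euc n → ℝ)
    (htr : ∀ᵐ x ∂σ, HasNTTrace Ω κ u x (f x)) :
    -- (i) f is σ-measurable
    AEMeasurable f σ ∧
    -- (ii) N^ε_κ u (x) → |f(x)| as ε → 0⁺, for σ-a.e. x
    (∀ᵐ x ∂σ, Tendsto (fun ε : ℝ => ntMaxOn Ω (collar Ω ε) κ u x) (𝓝[>] 0)
      (𝓝 (‖f x‖₊ : ℝ≥0∞))) ∧
    -- (iii) if N^δ_κ u ∈ L^p then f ∈ L^p and N^ε_κ u → |f| in L^p as ε → 0⁺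
    (∀ p : ℝ, 0 < p → ∀ δ : ℝ, 0 < δ →
      ∫⁻ x, (ntMaxOn Ω (collar Ω δ) κ u x) ^ p ∂σ < ⊤ →
      (∫⁻ x, (‖f x‖₊ : ℝ≥0∞) ^ p ∂σ < ⊤ ∧
        Tendsto (fun ε : ℝ =>
            ∫⁻ x, (ENNReal.ofReal (abs ((ntMaxOn Ω (collar Ω ε) κ u x).toReal - abs (f x)))) ^ p ∂σ)
          (𝓝[>] 0) (𝓝 0))) :=
  statement12_general n Ω hΩ σ hσ κ hκ u hu f htr
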